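/- Let U, U', V be L-qubit unitaries and let j ∈ {1,…,L}. Then |C_LHST^{(j)}(U,V) − C_LHST^{(j)}(U',V)| ≤ (1/4) Σ_{O ∈ {X,Y,Z}} ‖U† O_j U − U'† O_j U'‖, where O_j denotes the Pauli operator O acting on qubit j tensored with the identity on all other qubits. In particular, if ‖U† O_j U − U'† O_j U'‖ ≤ ε for each O ∈ {X,Y,Z}, then |C_LHST^{(j)}(U,V) − C_LHST^{(j)}(U',V)| ≤ (3/4)ε. -/

import Mathlib

open scoped Kronecker Matrix

namespace LVQC

/-- The space of operators on qubits indexed by `ι`. -/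
abbrev Op (ι : Type*) := Matrix (ι → Fin 2) (ι → Fin 2) ℂ

/-- Two-qubit gates. -/
abbrev G2 := Matrix (Fin 2 × Fin 2) (Fin 2 × Fin 2) ℂ

variable {ι : Type*} [Fintype ι] [DecidableEq ι]

/-- The operator norm (spectral norm) of a matrix. -/
noncomputable def opNorm {n : Type*} [Fintype n] [DecidableEq n] (M : Matrix n n ℂ) : ℝ :=
  ‖Matrix.toEuclideanCLM (𝕜 := ℂ) M‖

/-- The Bell state `|Φ+⟩_AB` on the doubled system. -/
noncomputable def bell (ι : Type*) [Fintype ι] [DecidableEq ι] :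
    (ι → Fin 2) × (ι → Fin 2) → ℂ :=
  fun p => if p.1 = p.2 then ((Real.sqrt (2 ^ Fintype.card ι) : ℝ) : ℂ)⁻¹ else 0

/-- Projector onto the full Bell state, `|Φ+⟩⟨Φ+|_AB`. -/
noncomputable def bellProj (ι : Type*) [Fintype ι] [DecidableEq ι] :
    Matrix ((ι → Fin 2) × (ι → Fin 2)) ((ι → Fin 2) × (ι → Fin 2)) ℂ :=
  Matrix.of fun p q => bell ι p * star (bell ι q)

/-- Projector `Π_j` onto the Bell pair at site `j`, tensored with the identity elsewhere. -/
noncomputable def PiProj (j : ι) :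
    Matrix ((ι → Fin 2) × (ι → Fin 2)) ((ι → Fin 2) × (ι → Fin 2)) ℂ :=
  Matrix.of fun p q =>
    if p.1 j = p.2 j ∧ q.1 j = q.2 j ∧ ∀ k, k ≠ j → p.1 k = q.1 k ∧ p.2 k = q.2 k
    then (2 : ℂ)⁻¹ else 0

/-- Entrywise complex conjugate `V*`. -/
noncomputable def conjMat (V : Op ι) : Op ι := V.map (starRingEnd ℂ)

/-- The state `ρ_AB(U,V) = (U_A ⊗ V*_B)|Φ+⟩⟨Φ+|(U_A ⊗ V*_B)†`. -/
noncomputable def rho (U V : Op ι) :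
    Matrix ((ι → Fin 2) × (ι → Fin 2)) ((ι → Fin 2) × (ι → Fin 2)) ℂ :=
  (U ⊗ₖ conjMat V) * bellProj ι * (U ⊗ₖ conjMat V)ᴴ

/-- Local cost function `C_LHST^{(j)}(U,V) = 1 - Tr[Π_j ρ_AB(U,V)]`. -/
noncomputable def CLHSTj (j : ι) (U V : Op ι) : ℝ :=
  1 - ((PiProj j * rho U V).trace).re

/-- Averaged local cost function `C_LHST(U,V)`. -/
noncomputable def CLHST (U V : Op ι) : ℝ :=
  (Fintype.card ι : ℝ)⁻¹ * ∑ j, CLHSTj j U V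

/-- Global cost function `C_HST(U,V) = 1 - |Tr(U†V)|²/4^L`. -/
noncomputable def CHST (U V : Op ι) : ℝ :=
  1 - ‖(Uᴴ * V).trace‖ ^ 2 / 4 ^ Fintype.card ι

/-- Single-qubit operator `O` placed at site `j`, tensored with the identity elsewhere. -/
noncomputable def embedAt (j : ι) (O : Matrix (Fin 2) (Fin 2) ℂ) : Op ι :=
  Matrix.of fun a b => O (a j) (b j) * (if ∀ k, k ≠ j → a k = b k then 1 else 0)

/-- Pauli X. -/
def pX : Matrix (Fin 2) (Fin 2) ℂ := !![0, 1; 1, 0]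
/-- Pauli Y. -/
def pY : Matrix (Fin 2) (Fin 2) ℂ := !![0, -Complex.I; Complex.I, 0]
/-- Pauli Z. -/
def pZ : Matrix (Fin 2) (Fin 2) ℂ := !![1, 0; 0, -1]

/-- Operator on the qubits in `S`, tensored with the identity on the rest. -/
noncomputable def embedSub (S : Finset ι) (N : Op ↥S) : Op ι :=
  Matrix.of fun a b =>
    N (fun k => a k.1) (fun k => b k.1) * (if ∀ k ∉ S, a k = b k then 1 else 0)

/-- `M` acts nontrivially only on the qubits in `S`. -/
def ActsOn (M : Op ι) (S : Finset ι) : Prop := ∃ N : Op ↥S, M = embedSub S N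

/-- Compression of an operator to the qubits in `S` (left inverse of `embedSub`). -/
noncomputable def compress (S : Finset ι) (M : Op ι) : Op ↥S :=
  Matrix.of fun a b =>
    M (fun k => if h : k ∈ S then a ⟨k, h⟩ else 0) (fun k => if h : k ∈ S then b ⟨k, h⟩ else 0)

/-- Time evolution `exp(-i H τ)`. -/
noncomputable def timeEvol (τ : ℝ) (H : Op ι) : Op ι :=
  NormedSpace.exp ((-(Complex.I * (τ : ℂ))) • H)

/-- Heisenberg evolution `e^{iHτ} O e^{-iHτ}`. -/
noncomputable def heis (τ : ℝ) (H O : Op ι) : Op ι :=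
  NormedSpace.exp ((Complex.I * (τ : ℂ)) • H) * O * timeEvol τ H

/-- Two-qubit gate `G` placed at sites `p`, `q`, tensored with the identity elsewhere. -/
noncomputable def embedPair (p q : ι) (G : G2) : Op ι :=
  Matrix.of fun a b =>
    G (a p, a q) (b p, b q) * (if ∀ k, k ≠ p → k ≠ q → a k = b k then 1 else 0)

/-- The domain `Λ_{L',j} = {j' : |j - j'| ≤ L'/2}` (linear distance, open boundary). -/
def LambdaF (L : ℕ) (L' : ℕ) (j : Fin L) : Finset (Fin L) :=
  Finset.univ.filter fun j' => 2 * ((j : ℤ) - (j' : ℤ)).natAbs ≤ L'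

/-- Gate `G` at positions `(p, p+1)` on `M` qubits (identity if out of range). -/
noncomputable def gateFull (M : ℕ) (p : ℕ) (G : G2) : Op (Fin M) :=
  if h : p + 1 < M then embedPair (⟨p, Nat.lt_of_succ_lt h⟩ : Fin M) ⟨p + 1, h⟩ G else 1

/-- Sublayer of gates on the (0-indexed) pairs `(2k, 2k+1)`. -/
noncomputable def sublayerA (M : ℕ) (g : ℕ → G2) : Op (Fin M) :=
  ((List.range (M / 2)).map fun k => gateFull M (2 * k) (g k)).prod

/-- Sublayer of gates on the (0-indexed) pairs `(2k+1, 2k+2)`. -/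
noncomputable def sublayerB (M : ℕ) (g : ℕ → G2) : Op (Fin M) :=
  ((List.range ((M - 1) / 2)).map fun k => gateFull M (2 * k + 1) (g k)).prod

/-- Depth-`d` brickwork circuit on `M` qubits: the `i`-th layer applies first the gates
`gA i k` on pairs `(2k,2k+1)` (the paper's 1-indexed `(2k-1,2k)`), then the gates `gB i k`
on pairs `(2k+1,2k+2)` (the paper's `(2k,2k+1)`). -/
noncomputable def brickFull (M d : ℕ) (gA gB : ℕ → ℕ → G2) : Op (Fin M) :=
  ((List.range d).map fun i => sublayerB M (gB i) * sublayerA M (gA i)).prod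

/-- Gate at positions `(p, p+1)` restricted to the subsystem `S`: kept exactly when its
support is contained in `S` (identity otherwise). -/
noncomputable def gateSub {L : ℕ} (S : Finset (Fin L)) (p : ℕ) (G : G2) : Op ↥S :=
  if h : p + 1 < L then
    if h2 : (⟨p, Nat.lt_of_succ_lt h⟩ : Fin L) ∈ S ∧ (⟨p + 1, h⟩ : Fin L) ∈ S then
      embedPair (⟨⟨p, Nat.lt_of_succ_lt h⟩, h2.1⟩ : ↥S) ⟨⟨p + 1, h⟩, h2.2⟩ G
    else 1
  else 1

/-- Sublayer of the restricted ansatz on pairs `(2k,2k+1)`. -/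
noncomputable def sublayerASub {L : ℕ} (S : Finset (Fin L)) (g : ℕ → G2) : Op ↥S :=
  ((List.range (L / 2)).map fun k => gateSub S (2 * k) (g k)).prod

/-- Sublayer of the restricted ansatz on pairs `(2k+1,2k+2)`. -/
noncomputable def sublayerBSub {L : ℕ} (S : Finset (Fin L)) (g : ℕ → G2) : Op ↥S :=
  ((List.range ((L - 1) / 2)).map fun k => gateSub S (2 * k + 1) (g k)).prod

/-- Restricted brickwork ansatz on the subsystem `S ⊆ {1,…,L}`: keeps exactly those
two-qubit gates whose support is contained in `S`. -/
noncomputable def brickSub {L : ℕ} (S : Finset (Fin L)) (d : ℕ) (gA gB : ℕ → ℕ → G2) :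
    Op ↥S :=
  ((List.range d).map fun i => sublayerBSub S (gB i) * sublayerASub S (gA i)).prod

/-- Site `s mod M` of the ring of `M` sites. -/
def finMod (M : ℕ) (hM : 0 < M) (s : ℕ) : Fin M := ⟨s % M, Nat.mod_lt _ hM⟩

/-- Periodic distance on the ring of `M` sites. -/
def pdist (M : ℕ) (j j' : Fin M) : ℕ :=
  min ((j : ℤ) - (j' : ℤ)).natAbs (M - ((j : ℤ) - (j' : ℤ)).natAbs)

open Classical in
/-- The domain `Λ_{L',j}` of periodic-distance radius `r = L'/2` around site `j`. -/
noncomputable def LambdaP (M : ℕ) (r : ℝ) (j : Fin M) : Finset (Fin M) :=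
  Finset.univ.filter fun j' => (pdist M j j' : ℝ) ≤ r

/-- Local term `h₀` (an operator on a window of `w` consecutive sites) translated so that
its window starts at site `s`, with periodic wrap-around, tensored with the identity. -/
noncomputable def embedWindow (M w : ℕ) (hM : 0 < M) (s : ℕ) (h0 : Op (Fin w)) :
    Op (Fin M) :=
  Matrix.of fun a b =>
    h0 (fun t => a (finMod M hM (s + t))) (fun t => b (finMod M hM (s + t))) *
      (if ∀ k : Fin M, (∀ t : Fin w, k ≠ finMod M hM (s + t)) → a k = b k then 1 else 0)

/-- Translation-invariant Hamiltonian with periodic boundary conditions on `M` sites,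
generated by the seed `h₀` acting on windows of `w` consecutive sites (range `w - 1`). -/
noncomputable def HPBC (M w : ℕ) (hM : 0 < M) (h0 : Op (Fin w)) : Op (Fin M) :=
  ∑ s ∈ Finset.range M, embedWindow M w hM s h0

/-- Restriction `H^{(L',j)}` of `HPBC`: the sum of those terms whose support is contained
in the periodic ball `Λ_{L',j}` of radius `r = L'/2` around `j`. -/
noncomputable def HPRest (M w : ℕ) (hM : 0 < M) (h0 : Op (Fin w)) (r : ℝ) (j : Fin M) :
    Op (Fin M) :=
  ∑ s ∈ (Finset.range M).filter
      (fun s => ∀ t : Fin w, finMod M hM (s + t) ∈ LambdaP M r j),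
    embedWindow M w hM s h0

/-- One layer of the translation-invariant PBC brickwork ansatz: the gate `gA` on all
pairs `(2k,2k+1)` is applied first, then the gate `gB` on all pairs `(2k+1,2k+2 mod M)`,
including the boundary pair. -/
noncomputable def layerPBC (M : ℕ) (hM : 0 < M) (gA gB : G2) : Op (Fin M) :=
  (((List.range (M / 2)).map fun k =>
      embedPair (finMod M hM (2 * k + 1)) (finMod M hM (2 * k + 2)) gB).prod) *
  (((List.range (M / 2)).map fun k =>
      embedPair (finMod M hM (2 * k)) (finMod M hM (2 * k + 1)) gA).prod)

/-- Depth-`d` translation-invariant PBC brickwork ansatz, with position-independent gates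
`gA i`, `gB i` within each layer `i`. -/
noncomputable def brickPBC (M : ℕ) (hM : 0 < M) (d : ℕ) (gA gB : ℕ → G2) : Op (Fin M) :=
  ((List.range d).map fun i => layerPBC M hM (gA i) (gB i)).prod

open scoped Matrix.Norms.L2Operator

set_option linter.unusedSectionVars false

/-! ### sum collapse -/

lemma sum_collapse (a : ι → Fin 2) (j : ι) (f : (ι → Fin 2) → ℂ)
    (hf : ∀ c, ¬ (∀ k, k ≠ j → a k = c k) → f c = 0) :
    ∑ c, f c = ∑ t : Fin 2, f (Function.update a j t) := by
  classical
  have h1 : ∑ c ∈ Finset.univ.filter (fun c => ∀ k, k ≠ j → a k = c k), f c = ∑ c, f c := by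
    apply Finset.sum_filter_of_ne
    intro c _ hc
    by_contra h
    exact hc (hf c h)
  rw [← h1]
  have h2 : Finset.univ.filter (fun c => ∀ k, k ≠ j → a k = c k)
      = Finset.univ.image (Function.update a j) := by
    ext c
    simp only [Finset.mem_filter, Finset.mem_univ, true_and, Finset.mem_image]
    constructor
    · intro h
      refine ⟨c j, ?_⟩
      funext k
      rcases eq_or_ne k j with rfl | hk
      · simp
      · rw [Function.update_of_ne hk]
        exact h k hk
    · rintro ⟨t, rfl⟩ k hk
      rw [Function.update_of_ne hk]
  rw [h2, Finset.sum_image]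
  intro t _ s _ h
  have := congrFun h j
  simpa using this

lemma update_off (a : ι → Fin 2) (j : ι) (t : Fin 2) :
    ∀ k, k ≠ j → a k = Function.update a j t k :=
  fun k hk => (Function.update_of_ne hk t a).symm

/-! ### embedAt algebra -/

lemma embedAt_one (j : ι) : embedAt j (1 : Matrix (Fin 2) (Fin 2) ℂ) = 1 := by
  ext a b
  simp only [embedAt, Matrix.of_apply, Matrix.one_apply]
  rcases eq_or_ne a b with rfl | h
  · simp
  · rw [if_neg h]
    by_cases h1 : a j = b j
    · have h2 : ¬ ∀ k, k ≠ j → a k = b k := by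
        intro hall
        apply h
        funext k
        rcases eq_or_ne k j with rfl | hk
        · exact h1
        · exact hall k hk
      rw [if_neg h2, mul_zero]
    · rw [if_neg h1, zero_mul]

lemma embedAt_mul (j : ι) (O P : Matrix (Fin 2) (Fin 2) ℂ) :
    embedAt j O * embedAt j P = embedAt j (O * P) := by
  ext a b
  rw [Matrix.mul_apply]
  rw [sum_collapse a j _ (fun c hc => by
    simp only [embedAt, Matrix.of_apply, if_neg hc, mul_zero, zero_mul])]
  simp only [embedAt, Matrix.of_apply, Function.update_self]
  have hupd : ∀ t : Fin 2, (∀ k, k ≠ j → a k = Function.update a j t k) := update_off a j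
  have hupd2 : ∀ t : Fin 2, (∀ k, k ≠ j → Function.update a j t k = b k) ↔
      (∀ k, k ≠ j → a k = b k) := by
    intro t
    constructor
    · intro h k hk; rw [hupd t k hk]; exact h k hk
    · intro h k hk; rw [← hupd t k hk]; exact h k hk
  by_cases h : ∀ k, k ≠ j → a k = b k
  · simp only [if_pos (hupd _), mul_one, hupd2, if_pos h, Matrix.mul_apply]
  · simp only [if_pos (hupd _), mul_one, hupd2, if_neg h, mul_zero, Finset.sum_const_zero]

lemma embedAt_conjTranspose (j : ι) (O : Matrix (Fin 2) (Fin 2) ℂ) :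
    (embedAt j O)ᴴ = embedAt j Oᴴ := by
  ext a b
  simp only [Matrix.conjTranspose_apply, embedAt, Matrix.of_apply, star_mul']
  have : (∀ k, k ≠ j → b k = a k) ↔ (∀ k, k ≠ j → a k = b k) := by
    constructor <;> intro h k hk <;> exact (h k hk).symm
  rw [apply_ite (star : ℂ → ℂ), star_one, star_zero]
  simp only [this]

/-! ### conjMat -/

lemma conjMat_mul (X Y : Op ι) : conjMat (X * Y) = conjMat X * conjMat Y :=
  Matrix.map_mul

lemma conjMat_conjTranspose (V : Op ι) : (conjMat V)ᴴ = conjMat (Vᴴ) := by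
  ext a b
  simp [conjMat]

lemma conjMat_transpose (M : Op ι) : (conjMat M)ᵀ = Mᴴ := by
  ext a b
  simp [conjMat]

/-! ### kronecker conjTranspose -/

lemma kron_conjTranspose {m : Type*} (M N : Matrix m m ℂ) :
    (M ⊗ₖ N)ᴴ = Mᴴ ⊗ₖ Nᴴ := by
  ext p q
  simp [Matrix.conjTranspose_apply, Matrix.kroneckerMap_apply, star_mul']

/-! ### trace of kronecker against bellProj -/

lemma bell_mul_star_bell :
    (((Real.sqrt (2 ^ Fintype.card ι) : ℝ) : ℂ)⁻¹) * star (((Real.sqrt (2 ^ Fintype.card ι) : ℝ) : ℂ)⁻¹)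
      = ((2:ℂ) ^ Fintype.card ι)⁻¹ := by
  rw [star_inv₀]
  rw [Complex.star_def, Complex.conj_ofReal]
  rw [← mul_inv]
  norm_cast
  rw [Real.mul_self_sqrt (by positivity)]
  push_cast
  norm_num

lemma trace_kron_bell (M N : Op ι) :
    ((M ⊗ₖ N) * bellProj ι).trace = ((2:ℂ) ^ Fintype.card ι)⁻¹ * (M * Nᵀ).trace := by
  classical
  have key : ∀ a b : ι → Fin 2,
      ((M ⊗ₖ N) * bellProj ι) (a, b) (a, b)
        = if a = b then ((2:ℂ) ^ Fintype.card ι)⁻¹ * (M * Nᵀ) a a else 0 := by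
    intro a b
    rw [Matrix.mul_apply]
    rcases eq_or_ne a b with rfl | hab
    · rw [if_pos rfl, Fintype.sum_prod_type]
      simp only [Matrix.kroneckerMap_apply, bellProj, Matrix.of_apply, bell,
        eq_self_iff_true, if_true]
      simp only [mul_ite, mul_zero, ite_mul, zero_mul, Finset.sum_ite_eq, Finset.mem_univ,
        if_true]
      rw [Matrix.mul_apply, Finset.mul_sum]
      apply Finset.sum_congr rfl
      intro c _
      rw [Matrix.transpose_apply, ← bell_mul_star_bell]
      ring
    · rw [if_neg hab]
      apply Finset.sum_eq_zero
      intro q _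
      simp only [Matrix.kroneckerMap_apply, bellProj, Matrix.of_apply, bell, if_neg hab]
      simp
  rw [Matrix.trace, Matrix.trace]
  simp only [Matrix.diag_apply]
  rw [Fintype.sum_prod_type]
  calc (∑ a, ∑ b, ((M ⊗ₖ N) * bellProj ι) (a, b) (a, b))
      = ∑ a, ∑ b, if a = b then ((2:ℂ) ^ Fintype.card ι)⁻¹ * (M * Nᵀ) a a else 0 :=
        Finset.sum_congr rfl fun a _ => Finset.sum_congr rfl fun b _ => key a b
    _ = ∑ a, ((2:ℂ) ^ Fintype.card ι)⁻¹ * (M * Nᵀ) a a := by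
        simp
    _ = ((2:ℂ) ^ Fintype.card ι)⁻¹ * ∑ a, (M * Nᵀ) a a := by rw [Finset.mul_sum]


set_option linter.unusedSectionVars false

/-! ### Pauli facts -/

lemma pauli_sum (x y z w : Fin 2) :
    (1 : Matrix (Fin 2) (Fin 2) ℂ) x y * star ((1 : Matrix (Fin 2) (Fin 2) ℂ) z w)
      + pX x y * star (pX z w) + pY x y * star (pY z w) + pZ x y * star (pZ z w)
      = 2 * ((if x = z then 1 else 0) * (if y = w then 1 else 0)) := by
  have fin2 : ∀ x : Fin 2, x = 0 ∨ x = 1 := by decide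
  rcases fin2 x with hx|hx <;> rcases fin2 y with hy|hy <;> rcases fin2 z with hz|hz <;>
    rcases fin2 w with hw|hw <;>
    subst hx <;> subst hy <;> subst hz <;> subst hw <;>
    norm_num [pX, pY, pZ, Matrix.one_apply, Complex.ext_iff]

lemma pX_conjT : pXᴴ = pX := by
  ext i j
  have fin2 : ∀ x : Fin 2, x = 0 ∨ x = 1 := by decide
  rcases fin2 i with h|h <;> rcases fin2 j with h2|h2 <;> subst h <;> subst h2 <;>
    simp [pX, Matrix.conjTranspose_apply]

lemma pY_conjT : pYᴴ = pY := by
  ext i j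
  have fin2 : ∀ x : Fin 2, x = 0 ∨ x = 1 := by decide
  rcases fin2 i with h|h <;> rcases fin2 j with h2|h2 <;> subst h <;> subst h2 <;>
    simp [pY, Matrix.conjTranspose_apply]

lemma pZ_conjT : pZᴴ = pZ := by
  ext i j
  have fin2 : ∀ x : Fin 2, x = 0 ∨ x = 1 := by decide
  rcases fin2 i with h|h <;> rcases fin2 j with h2|h2 <;> subst h <;> subst h2 <;>
    simp [pZ, Matrix.conjTranspose_apply]

lemma pX_mul_pX : pX * pX = 1 := by
  ext i j
  have fin2 : ∀ x : Fin 2, x = 0 ∨ x = 1 := by decide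
  rcases fin2 i with h|h <;> rcases fin2 j with h2|h2 <;> subst h <;> subst h2 <;>
    simp [pX, Matrix.mul_apply, Fin.sum_univ_two, Matrix.one_apply]

lemma pY_mul_pY : pY * pY = 1 := by
  ext i j
  have fin2 : ∀ x : Fin 2, x = 0 ∨ x = 1 := by decide
  rcases fin2 i with h|h <;> rcases fin2 j with h2|h2 <;> subst h <;> subst h2 <;>
    simp [pY, Matrix.mul_apply, Fin.sum_univ_two, Matrix.one_apply, Complex.I_mul_I]

lemma pZ_mul_pZ : pZ * pZ = 1 := by
  ext i j
  have fin2 : ∀ x : Fin 2, x = 0 ∨ x = 1 := by decide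
  rcases fin2 i with h|h <;> rcases fin2 j with h2|h2 <;> subst h <;> subst h2 <;>
    simp [pZ, Matrix.mul_apply, Fin.sum_univ_two, Matrix.one_apply]

/-! ### PiProj decomposition -/

lemma piProj_eq (j : ι) :
    PiProj j = (4:ℂ)⁻¹ • ((embedAt j 1 ⊗ₖ conjMat (embedAt j 1))
      + embedAt j pX ⊗ₖ conjMat (embedAt j pX)
      + embedAt j pY ⊗ₖ conjMat (embedAt j pY)
      + embedAt j pZ ⊗ₖ conjMat (embedAt j pZ)) := by
  ext p q
  obtain ⟨a, b⟩ := p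
  obtain ⟨c, d⟩ := q
  simp only [PiProj, Matrix.of_apply, Matrix.smul_apply, Matrix.add_apply,
    Matrix.kroneckerMap_apply, conjMat, Matrix.map_apply, embedAt, smul_eq_mul]
  by_cases h1 : ∀ k, k ≠ j → a k = c k
  · by_cases h2 : ∀ k, k ≠ j → b k = d k
    · have h3 : (∀ k, k ≠ j → a k = c k ∧ b k = d k) := fun k hk => ⟨h1 k hk, h2 k hk⟩
      simp only [if_pos h1, if_pos h2, mul_one, star_one, h3, and_true]
      have h4 : (a j = b j ∧ c j = d j ∧ ∀ (k : ι), k ≠ j → a k = c k ∧ b k = d k)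
          ↔ (a j = b j ∧ c j = d j) := by
        constructor
        · rintro ⟨u, v, _⟩; exact ⟨u, v⟩
        · rintro ⟨u, v⟩; exact ⟨u, v, h3⟩
      rw [if_congr h4 rfl rfl]
      have := pauli_sum (a j) (c j) (b j) (d j)
      simp only [Complex.star_def] at this
      rw [this]
      by_cases hx : a j = b j <;> by_cases hy : c j = d j <;>
        simp [hx, hy] <;> norm_num
    · have h3 : ¬ (a j = b j ∧ c j = d j ∧ ∀ k, k ≠ j → a k = c k ∧ b k = d k) := by
        rintro ⟨_, _, h⟩
        exact h2 fun k hk => (h k hk).2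
      simp [if_neg h2, if_neg h3]
  · have h3 : ¬ (a j = b j ∧ c j = d j ∧ ∀ k, k ≠ j → a k = c k ∧ b k = d k) := by
      rintro ⟨_, _, h⟩
      exact h1 fun k hk => (h k hk).1
    simp [if_neg h1, if_neg h3]


/-! ### trace of one Pauli term against rho -/

lemma trace_term (U V A : Op ι) (hA : Aᴴ = A) :
    ((A ⊗ₖ conjMat A) * rho U V).trace
      = ((2:ℂ) ^ Fintype.card ι)⁻¹ * ((Uᴴ * A * U) * (Vᴴ * A * V)).trace := by
  have step1 : ((A ⊗ₖ conjMat A) * rho U V).trace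
      = (((Uᴴ * A * U) ⊗ₖ ((conjMat V)ᴴ * conjMat A * conjMat V)) * bellProj ι).trace := by
    rw [rho]
    rw [show (A ⊗ₖ conjMat A) * ((U ⊗ₖ conjMat V) * bellProj ι * (U ⊗ₖ conjMat V)ᴴ)
        = ((A ⊗ₖ conjMat A) * (U ⊗ₖ conjMat V) * bellProj ι) * (U ⊗ₖ conjMat V)ᴴ by
      simp only [mul_assoc]]
    rw [Matrix.trace_mul_comm]
    rw [kron_conjTranspose]
    rw [show (Uᴴ ⊗ₖ (conjMat V)ᴴ) * ((A ⊗ₖ conjMat A) * (U ⊗ₖ conjMat V) * bellProj ι)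
        = ((Uᴴ ⊗ₖ (conjMat V)ᴴ) * (A ⊗ₖ conjMat A) * (U ⊗ₖ conjMat V)) * bellProj ι by
      simp only [mul_assoc]]
    rw [← Matrix.mul_kronecker_mul, ← Matrix.mul_kronecker_mul]
  rw [step1, trace_kron_bell]
  refine congrArg _ (congrArg Matrix.trace ?_)
  rw [conjMat_conjTranspose, ← conjMat_mul, ← conjMat_mul, conjMat_transpose]
  rw [Matrix.conjTranspose_mul, Matrix.conjTranspose_mul, Matrix.conjTranspose_conjTranspose,
    hA]
  simp only [mul_assoc]


/-! ### cost trace formula -/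

lemma cost_formula (j : ι) (U V : Op ι) :
    (PiProj j * rho U V).trace
      = (4:ℂ)⁻¹ * (((2:ℂ)^Fintype.card ι)⁻¹ * ((Uᴴ * embedAt j 1 * U) * (Vᴴ * embedAt j 1 * V)).trace
        + ((2:ℂ)^Fintype.card ι)⁻¹ * ((Uᴴ * embedAt j pX * U) * (Vᴴ * embedAt j pX * V)).trace
        + ((2:ℂ)^Fintype.card ι)⁻¹ * ((Uᴴ * embedAt j pY * U) * (Vᴴ * embedAt j pY * V)).trace
        + ((2:ℂ)^Fintype.card ι)⁻¹ * ((Uᴴ * embedAt j pZ * U) * (Vᴴ * embedAt j pZ * V)).trace) := by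
  rw [piProj_eq j]
  rw [Matrix.smul_mul, Matrix.trace_smul]
  rw [Matrix.add_mul, Matrix.add_mul, Matrix.add_mul]
  rw [Matrix.trace_add, Matrix.trace_add, Matrix.trace_add]
  rw [trace_term U V _ (by rw [embedAt_conjTranspose, Matrix.conjTranspose_one])]
  rw [trace_term U V _ (by rw [embedAt_conjTranspose, pX_conjT])]
  rw [trace_term U V _ (by rw [embedAt_conjTranspose, pY_conjT])]
  rw [trace_term U V _ (by rw [embedAt_conjTranspose, pZ_conjT])]
  rw [smul_eq_mul]

section NormBound

variable {n : Type*} [Fintype n] [DecidableEq n]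

lemma entry_abs_le_l2norm (M : Matrix n n ℂ) (i j : n) : ‖M i j‖ ≤ ‖M‖ := by
  have hx : ‖(EuclideanSpace.single j (1:ℂ) : EuclideanSpace ℂ n)‖ = 1 := by
    simp [EuclideanSpace.norm_single]
  have h := M.l2_opNorm_mulVec (EuclideanSpace.single j (1:ℂ))
  rw [hx, mul_one] at h
  refine le_trans ?_ h
  have hcoord : ∀ (y : EuclideanSpace ℂ n) (i : n), ‖y i‖ ≤ ‖y‖ := by
    intro y i
    rw [EuclideanSpace.norm_eq]
    have : ‖y i‖ = Real.sqrt (‖y i‖^2) := by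
      rw [Real.sqrt_sq (norm_nonneg _)]
    rw [this]
    apply Real.sqrt_le_sqrt
    exact Finset.single_le_sum (f := fun k => ‖y k‖^2) (fun k _ => sq_nonneg _) (Finset.mem_univ i)
  have := hcoord ((EuclideanSpace.equiv n ℂ).symm <| M *ᵥ (EuclideanSpace.single j (1:ℂ))) i
  refine le_trans (le_of_eq ?_) this
  have : (M *ᵥ (EuclideanSpace.single j (1:ℂ) : EuclideanSpace ℂ n)) i = M i j := by
    simp [Matrix.mulVec, dotProduct, EuclideanSpace.single_apply]
  exact congrArg norm this.symm


lemma trace_mul_unitary_abs_le [Nonempty n] (D B : Matrix n n ℂ)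
    (hB : B ∈ Matrix.unitaryGroup n ℂ) :
    ‖(D * B).trace‖ ≤ (Fintype.card n : ℝ) * ‖D‖ := by
  have hnt : Nontrivial (Matrix n n ℂ) := by unfold Matrix; infer_instance
  calc ‖(D * B).trace‖
      ≤ ∑ a : n, ‖(D * B) a a‖ := by
        rw [Matrix.trace]
        exact norm_sum_le _ _
    _ ≤ ∑ _a : n, ‖D * B‖ := Finset.sum_le_sum fun a _ => entry_abs_le_l2norm _ a a
    _ = (Fintype.card n : ℝ) * ‖D * B‖ := by simp [Finset.sum_const, nsmul_eq_mul]
    _ ≤ (Fintype.card n : ℝ) * (‖D‖ * ‖B‖) := by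
        have := Matrix.l2_opNorm_mul D B
        nlinarith [norm_nonneg (D*B), Fintype.card_pos (α := n)]
    _ = (Fintype.card n : ℝ) * ‖D‖ := by
        rw [CStarRing.norm_of_mem_unitary hB, mul_one]

end NormBound


/-- For `L`-qubit unitaries `U`, `U'`, `V` and a site `j`, the difference of
local cost functions is bounded by `(1/4) Σ_{O ∈ {X,Y,Z}} ‖U† O_j U − U'† O_j U'‖`; in
particular, if each of the three operator-norm differences is at most `ε`, then the
difference of local cost functions is at most `(3/4) ε`. -/
theorem local_cost_difference_pauli_bound (L : ℕ) (U U' V : Op (Fin L)) (j : Fin L)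
    (hU : U ∈ Matrix.unitaryGroup (Fin L → Fin 2) ℂ)
    (hU' : U' ∈ Matrix.unitaryGroup (Fin L → Fin 2) ℂ)
    (hV : V ∈ Matrix.unitaryGroup (Fin L → Fin 2) ℂ) :
    |CLHSTj j U V - CLHSTj j U' V| ≤
      (1 / 4) * (([pX, pY, pZ].map fun O =>
        opNorm (Uᴴ * embedAt j O * U - U'ᴴ * embedAt j O * U')).sum)
    ∧ ∀ ε : ℝ,
      (∀ O ∈ [pX, pY, pZ],
        opNorm (Uᴴ * embedAt j O * U - U'ᴴ * embedAt j O * U') ≤ ε) →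
      |CLHSTj j U V - CLHSTj j U' V| ≤ 3 / 4 * ε := by
  classical
  have hUu : Uᴴ * U = 1 := by
    rw [← Matrix.star_eq_conjTranspose]
    exact (Matrix.mem_unitaryGroup_iff').mp hU
  have hU'u : U'ᴴ * U' = 1 := by
    rw [← Matrix.star_eq_conjTranspose]
    exact (Matrix.mem_unitaryGroup_iff').mp hU'
  -- unitarity of conjugated Paulis
  have hAmem : ∀ O : Matrix (Fin 2) (Fin 2) ℂ, Oᴴ = O → O * O = 1 →
      embedAt (ι := Fin L) j O ∈ Matrix.unitaryGroup (Fin L → Fin 2) ℂ := by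
    intro O hO1 hO2
    rw [Matrix.mem_unitaryGroup_iff']
    rw [Matrix.star_eq_conjTranspose, embedAt_conjTranspose, hO1, embedAt_mul, hO2, embedAt_one]
  have hBmem : ∀ O : Matrix (Fin 2) (Fin 2) ℂ, Oᴴ = O → O * O = 1 →
      Vᴴ * embedAt (ι := Fin L) j O * V ∈ Matrix.unitaryGroup (Fin L → Fin 2) ℂ := by
    intro O hO1 hO2
    rw [← Matrix.star_eq_conjTranspose]
    exact mul_mem (mul_mem (Unitary.star_mem hV) (hAmem O hO1 hO2)) hV
  set AX := embedAt (ι := Fin L) j pX with hAX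
  set AY := embedAt (ι := Fin L) j pY with hAY
  set AZ := embedAt (ι := Fin L) j pZ with hAZ
  set DX := U'ᴴ * AX * U' - Uᴴ * AX * U with hDX
  set DY := U'ᴴ * AY * U' - Uᴴ * AY * U with hDY
  set DZ := U'ᴴ * AZ * U' - Uᴴ * AZ * U with hDZ
  set c : ℂ := ((2:ℂ) ^ Fintype.card (Fin L))⁻¹ with hc
  have hz : (PiProj j * rho U' V).trace - (PiProj j * rho U V).trace
      = (4:ℂ)⁻¹ * (c * ((DX * (Vᴴ * AX * V)).trace)
        + c * ((DY * (Vᴴ * AY * V)).trace)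
        + c * ((DZ * (Vᴴ * AZ * V)).trace)) := by
    rw [cost_formula j U V, cost_formula j U' V]
    simp only [embedAt_one, mul_one, hUu, hU'u]
    simp only [hDX, hDY, hDZ, Matrix.sub_mul, Matrix.trace_sub]
    ring
  have hdiff : CLHSTj j U V - CLHSTj j U' V
      = ((PiProj j * rho U' V).trace - (PiProj j * rho U V).trace).re := by
    simp only [CLHSTj, Complex.sub_re]
    ring
  -- trace bounds
  have hcardn : (Fintype.card (Fin L → Fin 2) : ℝ) = 2 ^ L := by
    simp [Fintype.card_fun]
  have habsc : ‖c‖ = ((2:ℝ) ^ L)⁻¹ := by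
    rw [hc, norm_inv, norm_pow, Complex.norm_two, Fintype.card_fin]
  have key : ∀ (D B : Matrix (Fin L → Fin 2) (Fin L → Fin 2) ℂ),
      B ∈ Matrix.unitaryGroup (Fin L → Fin 2) ℂ →
      ‖c * (D * B).trace‖ ≤ ‖D‖ := by
    intro D B hB
    rw [norm_mul, habsc]
    have h1 := trace_mul_unitary_abs_le D B hB
    rw [hcardn] at h1
    have h2 : (0:ℝ) < 2 ^ L := by positivity
    calc ((2:ℝ) ^ L)⁻¹ * ‖(D * B).trace‖
        ≤ ((2:ℝ) ^ L)⁻¹ * (2 ^ L * ‖D‖) := by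
          apply mul_le_mul_of_nonneg_left h1 (by positivity)
      _ = ‖D‖ := by field_simp
  have bX := key DX _ (hBmem pX pX_conjT pX_mul_pX)
  have bY := key DY _ (hBmem pY pY_conjT pY_mul_pY)
  have bZ := key DZ _ (hBmem pZ pZ_conjT pZ_mul_pZ)
  have hnX : ‖DX‖ = opNorm (Uᴴ * AX * U - U'ᴴ * AX * U') := by
    rw [hDX, norm_sub_rev]; rfl
  have hnY : ‖DY‖ = opNorm (Uᴴ * AY * U - U'ᴴ * AY * U') := by
    rw [hDY, norm_sub_rev]; rfl
  have hnZ : ‖DZ‖ = opNorm (Uᴴ * AZ * U - U'ᴴ * AZ * U') := by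
    rw [hDZ, norm_sub_rev]; rfl
  have main : |CLHSTj j U V - CLHSTj j U' V|
      ≤ (1/4) * (opNorm (Uᴴ * AX * U - U'ᴴ * AX * U')
        + opNorm (Uᴴ * AY * U - U'ᴴ * AY * U')
        + opNorm (Uᴴ * AZ * U - U'ᴴ * AZ * U')) := by
    rw [hdiff, hz]
    calc |((4:ℂ)⁻¹ * (c * ((DX * (Vᴴ * AX * V)).trace)
          + c * ((DY * (Vᴴ * AY * V)).trace)
          + c * ((DZ * (Vᴴ * AZ * V)).trace))).re|
        ≤ ‖(4:ℂ)⁻¹ * (c * ((DX * (Vᴴ * AX * V)).trace)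
          + c * ((DY * (Vᴴ * AY * V)).trace)
          + c * ((DZ * (Vᴴ * AZ * V)).trace))‖ := Complex.abs_re_le_norm _
      _ = (4:ℝ)⁻¹ * ‖c * ((DX * (Vᴴ * AX * V)).trace)
          + c * ((DY * (Vᴴ * AY * V)).trace)
          + c * ((DZ * (Vᴴ * AZ * V)).trace)‖ := by
          rw [norm_mul]
          norm_num
      _ ≤ (4:ℝ)⁻¹ * (‖c * ((DX * (Vᴴ * AX * V)).trace)‖
          + ‖c * ((DY * (Vᴴ * AY * V)).trace)‖
          + ‖c * ((DZ * (Vᴴ * AZ * V)).trace)‖) := by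
          have := norm_add_le (c * ((DX * (Vᴴ * AX * V)).trace)
            + c * ((DY * (Vᴴ * AY * V)).trace)) (c * ((DZ * (Vᴴ * AZ * V)).trace))
          have h2 := norm_add_le (c * ((DX * (Vᴴ * AX * V)).trace))
            (c * ((DY * (Vᴴ * AY * V)).trace))
          nlinarith [norm_nonneg (c * ((DZ * (Vᴴ * AZ * V)).trace))]
      _ ≤ (1/4) * (opNorm (Uᴴ * AX * U - U'ᴴ * AX * U')
          + opNorm (Uᴴ * AY * U - U'ᴴ * AY * U')
          + opNorm (Uᴴ * AZ * U - U'ᴴ * AZ * U')) := by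
          rw [← hnX, ← hnY, ← hnZ]
          nlinarith [bX, bY, bZ]
  constructor
  · simp only [List.map_cons, List.map_nil, List.sum_cons, List.sum_nil, add_zero]
    calc |CLHSTj j U V - CLHSTj j U' V| ≤ _ := main
    _ = 1 / 4 * (opNorm (Uᴴ * AX * U - U'ᴴ * AX * U')
          + (opNorm (Uᴴ * AY * U - U'ᴴ * AY * U')
          + opNorm (Uᴴ * AZ * U - U'ᴴ * AZ * U'))) := by ring
  · intro ε hε
    have h1 := hε pX (by simp)
    have h2 := hε pY (by simp)
    have h3 := hε pZ (by simp)
    calc |CLHSTj j U V - CLHSTj j U' V| ≤ _ := main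
      _ ≤ 3 / 4 * ε := by
        rw [hAX, hAY, hAZ] at *
        linarith

end LVQC
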